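/- Let I ⊆ ℝ be a nonempty interval, let ζ₁,…,ζ_N ∈ I, let ν = (1/N) Σ_{i=1}^N δ_{ζᵢ}, and let ε > 0. Then inf{ E_{ζ∼Q}[ζ] : Q a probability measure supported on the closure of I with finite first moment and W₁(Q, ν) ≤ ε } = max{ (1/N) Σ_{i=1}^N ζ_i − ε, inf I } (with the convention that the maximum equals (1/N) Σᵢ ζᵢ − ε when inf I = −∞). -/

import Mathlib

open MeasureTheory
open scoped ENNReal

/-- The `p`-th power transport cost of a coupling `π` with ground cost `d`. -/
noncomputable def transportCost {α : Type*} [MeasurableSpace α]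
    (p : ℝ) (d : α → α → ℝ) (π : Measure (α × α)) : ℝ≥0∞ :=
  ∫⁻ w, ENNReal.ofReal (d w.1 w.2 ^ p) ∂π

/-- The `p`-Wasserstein distance between `μ` and `ν` with ground cost `d`:
the infimum of the `p`-th root of the transport cost over all couplings. -/
noncomputable def wassersteinDist {α : Type*} [MeasurableSpace α]
    (p : ℝ) (d : α → α → ℝ) (μ ν : Measure α) : ℝ≥0∞ :=
  (⨅ (π : Measure (α × α)) (_ : IsProbabilityMeasure π ∧
      π.map Prod.fst = μ ∧ π.map Prod.snd = ν), transportCost p d π) ^ (1 / p)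

/-- The empirical distribution of the points `ξ 1, …, ξ N`. -/
noncomputable def empMeasure {α : Type*} [MeasurableSpace α] {N : ℕ}
    (ξ : Fin N → α) : Measure α :=
  (N : ℝ≥0∞)⁻¹ • ∑ i, Measure.dirac (ξ i)

/-- Probability measures on `ℝ` supported on `S`, with finite `p`-th moment, within
`p`-Wasserstein distance (with cost `|·|`) `ε` of `ν`. -/
def realWassersteinBall (p : ℝ) (S : Set ℝ) (ν : Measure ℝ) (ε : ℝ) : Set (Measure ℝ) :=
  {Q | IsProbabilityMeasure Q ∧ Q Sᶜ = 0 ∧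
    (∫⁻ t, ENNReal.ofReal (|t| ^ p) ∂Q) < ⊤ ∧
    wassersteinDist p (fun a b => |a - b|) Q ν ≤ ENNReal.ofReal ε}

/-!
For a coupling `π` of `Q` and `ν`, `mean ν - mean Q = ∫ (y - x) dπ ≤ ∫ |x - y| dπ`, so every `Q`
in the ball has mean at least `mean ν - ε`, and at least `inf I` since it lives on `closure I`.
Conversely, for a point `a ≤ ζ i` of `closure I`, moving a fraction `t` of the mass of `ν` to `a`
costs `t (mean ν - a)` and lowers the mean by exactly that amount; `t = min 1 (ε / (mean ν - a))`
attains `max (mean ν - ε) a`. Take `a = inf I` if `I` is bounded below, and `a ∈ I` below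
`mean ν - ε` otherwise.
-/

open Set

lemma wassersteinDist_one {α : Type*} [MeasurableSpace α] (d : α → α → ℝ) (μ ν : Measure α) :
    wassersteinDist 1 d μ ν = ⨅ (π : Measure (α × α)) (_ : IsProbabilityMeasure π ∧
      π.map Prod.fst = μ ∧ π.map Prod.snd = ν), ∫⁻ w, ENNReal.ofReal (d w.1 w.2) ∂π := by
  simp [wassersteinDist, transportCost]

lemma ofReal_integral_sub_le_wassersteinDist_one {μ ν : Measure ℝ}
    (hμ : Integrable id μ) (hν : Integrable id ν) :
    ENNReal.ofReal (∫ x, x ∂ν - ∫ x, x ∂μ) ≤ wassersteinDist 1 (fun a b => |a - b|) μ ν := by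
  rw [wassersteinDist_one]
  refine le_iInf₂ fun π ⟨_, hfst, hsnd⟩ => ?_
  subst hfst hsnd
  have h₁ : Integrable Prod.fst π :=
    (integrable_map_measure aestronglyMeasurable_id measurable_fst.aemeasurable).1 hμ
  have h₂ : Integrable Prod.snd π :=
    (integrable_map_measure aestronglyMeasurable_id measurable_snd.aemeasurable).1 hν
  calc ENNReal.ofReal (∫ x, x ∂π.map Prod.snd - ∫ x, x ∂π.map Prod.fst)
      = ENNReal.ofReal (∫ w, (w.2 - w.1) ∂π) := by
        rw [integral_map measurable_snd.aemeasurable (f := fun x => x) aestronglyMeasurable_id,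
          integral_map measurable_fst.aemeasurable (f := fun x => x) aestronglyMeasurable_id,
          integral_sub h₂ h₁]
    _ ≤ ENNReal.ofReal (∫ w, |w.1 - w.2| ∂π) :=
        ENNReal.ofReal_le_ofReal <| integral_mono (h₂.sub h₁) (h₁.sub h₂).abs fun w => by
          rw [abs_sub_comm]; exact le_abs_self _
    _ = ∫⁻ w, ENNReal.ofReal |w.1 - w.2| ∂π :=
        ofReal_integral_eq_lintegral_ofReal (h₁.sub h₂).abs (ae_of_all _ fun _ => abs_nonneg _)

lemma lintegral_ofReal_abs_rpow_one_lt_top_iff (Q : Measure ℝ) :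
    (∫⁻ x, ENNReal.ofReal (|x| ^ (1 : ℝ)) ∂Q) < ⊤ ↔ Integrable id Q := by
  simp [Integrable, HasFiniteIntegral, Real.enorm_eq_ofReal_abs, aestronglyMeasurable_id]

section DiracMix

variable {α : Type*} [MeasurableSpace α]

noncomputable def diracMix (t : ℝ) (ν : Measure α) (a : α) : Measure α :=
  ENNReal.ofReal (1 - t) • ν + ENNReal.ofReal t • Measure.dirac a

variable {t : ℝ} {ν : Measure α} {a : α}

lemma isProbabilityMeasure_diracMix [IsProbabilityMeasure ν] (ht₀ : 0 ≤ t) (ht₁ : t ≤ 1) :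
    IsProbabilityMeasure (diracMix t ν a) := by
  constructor
  simp [diracMix, ← ENNReal.ofReal_add (sub_nonneg.2 ht₁) ht₀]

lemma diracMix_compl_eq_zero [MeasurableSingletonClass α] {S : Set α} (hν : ν Sᶜ = 0)
    (ha : a ∈ S) : diracMix t ν a Sᶜ = 0 := by
  simp [diracMix, hν, Measure.dirac_apply, ha]

variable {E : Type*} [NormedAddCommGroup E] {f : α → E}

lemma MeasureTheory.Integrable.diracMix [MeasurableSingletonClass α] (hf : Integrable f ν) :
    Integrable f (diracMix t ν a) :=
  (hf.smul_measure ENNReal.ofReal_ne_top).add_measure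
    ((integrable_dirac enorm_lt_top).smul_measure ENNReal.ofReal_ne_top)

lemma integral_diracMix [MeasurableSingletonClass α] [NormedSpace ℝ E] [CompleteSpace E]
    (hf : Integrable f ν) (ht₀ : 0 ≤ t) (ht₁ : t ≤ 1) :
    ∫ x, f x ∂diracMix t ν a = (1 - t) • ∫ x, f x ∂ν + t • f a := by
  rw [diracMix, integral_add_measure (hf.smul_measure ENNReal.ofReal_ne_top)
      ((integrable_dirac enorm_lt_top).smul_measure ENNReal.ofReal_ne_top),
    integral_smul_measure, integral_smul_measure, integral_dirac,
    ENNReal.toReal_ofReal (sub_nonneg.2 ht₁), ENNReal.toReal_ofReal ht₀]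

end DiracMix

lemma wassersteinDist_diracMix_le {ν : Measure ℝ} [IsProbabilityMeasure ν] {a t : ℝ}
    (hν : Integrable id ν) (ha : ∀ᵐ x ∂ν, a ≤ x) (ht₀ : 0 ≤ t) (ht₁ : t ≤ 1) :
    wassersteinDist 1 (fun a b => |a - b|) (diracMix t ν a) ν ≤
      ENNReal.ofReal (t * (∫ x, x ∂ν - a)) := by
  set π : Measure (ℝ × ℝ) := ENNReal.ofReal (1 - t) • ν.map (fun x => (x, x)) +
    ENNReal.ofReal t • ν.map (Prod.mk a)
  have hdiag : Measurable fun x : ℝ => (x, x) := measurable_id.prodMk measurable_id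
  have hfst : π.map Prod.fst = diracMix t ν a := by
    simp only [π, diracMix, Measure.map_add _ _ measurable_fst, Measure.map_smul,
      Measure.map_map measurable_fst hdiag, Measure.map_map measurable_fst measurable_prodMk_left]
    simp [Function.comp_def, Measure.map_const]
  have hsnd : π.map Prod.snd = ν := by
    simp only [π, Measure.map_add _ _ measurable_snd, Measure.map_smul,
      Measure.map_map measurable_snd hdiag, Measure.map_map measurable_snd measurable_prodMk_left]
    simp [Function.comp_def, ← add_smul, ← ENNReal.ofReal_add (sub_nonneg.2 ht₁) ht₀]
  have hπ : IsProbabilityMeasure π := by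
    have := isProbabilityMeasure_diracMix (ν := ν) (a := a) ht₀ ht₁
    constructor
    rw [← preimage_univ (f := Prod.fst), ← Measure.map_apply measurable_fst .univ, hfst,
      measure_univ]
  have hcost : ∫⁻ x, ENNReal.ofReal |a - x| ∂ν = ENNReal.ofReal (∫ x, x ∂ν - a) := by
    have hmean : ∫ x, (x - a) ∂ν = ∫ x, x ∂ν - a := by
      rw [integral_sub (f := fun x => x) hν (integrable_const a)]; simp
    rw [← hmean, ofReal_integral_eq_lintegral_ofReal (f := fun x => x - a)
      (hν.sub (integrable_const a)) (ha.mono fun x hx => sub_nonneg.2 hx)]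
    exact lintegral_congr_ae (ha.mono fun x hx => by
      simp only [abs_sub_comm a, abs_of_nonneg (sub_nonneg.2 hx)])
  rw [wassersteinDist_one]
  refine (iInf₂_le π ⟨hπ, hfst, hsnd⟩).trans_eq ?_
  rw [lintegral_add_measure, lintegral_smul_measure, lintegral_smul_measure,
    lintegral_map (by fun_prop) hdiag, lintegral_map (by fun_prop) measurable_prodMk_left]
  simp [hcost, ENNReal.ofReal_mul ht₀]

lemma ae_le_of_mem_lowerBounds {α : Type*} [MeasurableSpace α] [Preorder α] {μ : Measure α}
    {S : Set α} (hμS : μ Sᶜ = 0) {c : α} (hc : c ∈ lowerBounds S) : ∀ᵐ x ∂μ, c ≤ x :=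
  measure_mono_null (fun _ hx hxS => hx (hc hxS)) hμS

section Ball

variable {S : Set ℝ} {ν : Measure ℝ} {ε : ℝ}

lemma integral_sub_le_of_mem_realWassersteinBall (hν : Integrable id ν) (hε : 0 ≤ ε) {Q : Measure ℝ}
    (hQ : Q ∈ realWassersteinBall 1 S ν ε) : ∫ x, x ∂ν - ε ≤ ∫ x, x ∂Q := by
  obtain ⟨-, -, hmom, hW⟩ := hQ
  have := (ofReal_integral_sub_le_wassersteinDist_one
    ((lintegral_ofReal_abs_rpow_one_lt_top_iff Q).1 hmom) hν).trans hW
  linarith [(ENNReal.ofReal_le_ofReal_iff hε).1 this]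

lemma le_integral_of_mem_realWassersteinBall {c : ℝ} (hc : c ∈ lowerBounds S) {Q : Measure ℝ}
    (hQ : Q ∈ realWassersteinBall 1 S ν ε) : c ≤ ∫ x, x ∂Q := by
  obtain ⟨_, hQS, hmom, -⟩ := hQ
  simpa using integral_mono_ae (integrable_const c)
    ((lintegral_ofReal_abs_rpow_one_lt_top_iff Q).1 hmom) (ae_le_of_mem_lowerBounds hQS hc)

variable [IsProbabilityMeasure ν] {a t : ℝ}

lemma diracMix_mem_realWassersteinBall (hν : Integrable id ν) (hνS : ν Sᶜ = 0) (haS : a ∈ S)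
    (ha : ∀ᵐ x ∂ν, a ≤ x) (ht₀ : 0 ≤ t) (ht₁ : t ≤ 1) (hcost : t * (∫ x, x ∂ν - a) ≤ ε) :
    diracMix t ν a ∈ realWassersteinBall 1 S ν ε :=
  ⟨isProbabilityMeasure_diracMix ht₀ ht₁, diracMix_compl_eq_zero hνS haS,
    (lintegral_ofReal_abs_rpow_one_lt_top_iff _).2 hν.diracMix,
    (wassersteinDist_diracMix_le hν ha ht₀ ht₁).trans (ENNReal.ofReal_le_ofReal hcost)⟩

lemma exists_mem_realWassersteinBall_integral_eq_max (hν : Integrable id ν) (hνS : ν Sᶜ = 0)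
    (haS : a ∈ S) (ha : ∀ᵐ x ∂ν, a ≤ x) (hε : 0 ≤ ε) :
    ∃ Q ∈ realWassersteinBall 1 S ν ε, ∫ x, x ∂Q = max (∫ x, x ∂ν - ε) a := by
  set m := ∫ x, x ∂ν
  have hmean (t : ℝ) (ht₀ : 0 ≤ t) (ht₁ : t ≤ 1) :
      ∫ x, x ∂diracMix t ν a = m - t * (m - a) := by
    rw [integral_diracMix (f := fun x => x) hν ht₀ ht₁, smul_eq_mul, smul_eq_mul]; ring
  rcases le_or_gt a (m - ε) with hle | hlt
  · set t := ε / (m - a)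
    have htm : t * (m - a) = ε := by
      rcases (sub_nonneg.2 (hle.trans (sub_le_self m hε))).eq_or_lt with h | h
      · simp [t, ← h, (show ε = 0 by linarith)]
      · exact div_mul_cancel₀ ε h.ne'
    have ht₀ : 0 ≤ t := div_nonneg hε (by linarith)
    have ht₁ : t ≤ 1 := div_le_one_of_le₀ (by linarith) (by linarith)
    refine ⟨diracMix t ν a, diracMix_mem_realWassersteinBall hν hνS haS ha ht₀ ht₁ htm.le, ?_⟩
    rw [hmean t ht₀ ht₁, htm, max_eq_left hle]
  · refine ⟨diracMix 1 ν a, diracMix_mem_realWassersteinBall hν hνS haS ha zero_le_one le_rfl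
      (by linarith), ?_⟩
    rw [hmean 1 zero_le_one le_rfl, max_eq_right hlt.le]; ring

end Ball

section Empirical

variable {α : Type*} [MeasurableSpace α] {N : ℕ}

lemma isProbabilityMeasure_empMeasure (hN : 0 < N) (ξ : Fin N → α) :
    IsProbabilityMeasure (empMeasure ξ) := by
  constructor
  simp [empMeasure, ENNReal.inv_mul_cancel (Nat.cast_ne_zero.2 hN.ne')]

variable [MeasurableSingletonClass α]

lemma ae_empMeasure {ξ : Fin N → α} {p : α → Prop} (h : ∀ i, p (ξ i)) :
    ∀ᵐ x ∂empMeasure ξ, p x := by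
  simp [ae_iff, empMeasure, Measure.dirac_apply, h]

variable {E : Type*} [NormedAddCommGroup E]

lemma integrable_empMeasure (ξ : Fin N → α) (f : α → E) : Integrable f (empMeasure ξ) := by
  rcases N.eq_zero_or_pos with rfl | hN
  · simp [empMeasure]
  · exact (integrable_finsetSum_measure.2 fun _ _ => integrable_dirac enorm_lt_top).smul_measure
      (by simp [hN.ne'])

lemma integral_empMeasure [NormedSpace ℝ E] [CompleteSpace E] (ξ : Fin N → α) (f : α → E) :
    ∫ x, f x ∂empMeasure ξ = (N : ℝ)⁻¹ • ∑ i, f (ξ i) := by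
  rw [empMeasure, integral_smul_measure,
    integral_finsetSum_measure fun _ _ => integrable_dirac enorm_lt_top]
  simp [integral_dirac]

end Empirical

namespace EReal

lemma sInf_image_coe_of_bddBelow {s : Set ℝ} (hs : s.Nonempty) (hbd : BddBelow s) :
    sInf ((fun x : ℝ => (x : EReal)) '' s) = (sInf s : ℝ) :=
  (coe_strictMono.monotone.map_csInf_of_continuousAt continuous_coe_real_ereal.continuousAt
    hs hbd).symm

lemma sInf_image_coe_eq_bot {s : Set ℝ} (hs : ¬BddBelow s) :
    sInf ((fun x : ℝ => (x : EReal)) '' s) = ⊥ := by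
  refine sInf_eq_bot.2 fun b hb => ?_
  induction b with
  | bot => exact absurd hb (lt_irrefl _)
  | coe c =>
    obtain ⟨x, hx, hxc⟩ := not_bddBelow_iff.1 hs c
    exact ⟨x, mem_image_of_mem _ hx, EReal.coe_lt_coe_iff.2 hxc⟩
  | top =>
    obtain ⟨x, hx, -⟩ := not_bddBelow_iff.1 hs 0
    exact ⟨x, mem_image_of_mem _ hx, coe_lt_top x⟩

lemma sInf_image_coe_le {s : Set ℝ} (hs : s.Nonempty) {y : ℝ}
    (h : ∀ c ∈ lowerBounds s, c ≤ y) : sInf ((fun x : ℝ => (x : EReal)) '' s) ≤ y := by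
  by_cases hbd : BddBelow s
  · rw [sInf_image_coe_of_bddBelow hs hbd]
    exact EReal.coe_le_coe_iff.2 (h _ fun x hx => csInf_le hbd hx)
  · rw [sInf_image_coe_eq_bot hbd]
    exact bot_le

end EReal

section Extremal

variable {I : Set ℝ} {ν : Measure ℝ} {ε : ℝ}

lemma le_sInf_integral_image_realWassersteinBall (hI : I.Nonempty) (hν : Integrable id ν)
    (hε : 0 ≤ ε) :
    max ((∫ x, x ∂ν - ε : ℝ) : EReal) (sInf ((fun t : ℝ => (t : EReal)) '' I)) ≤
      sInf ((fun Q : Measure ℝ => ((∫ t, t ∂Q : ℝ) : EReal)) ''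
        realWassersteinBall 1 (closure I) ν ε) := by
  refine le_sInf ?_
  rintro _ ⟨Q, hQ, rfl⟩
  refine max_le (EReal.coe_le_coe_iff.2 (integral_sub_le_of_mem_realWassersteinBall hν hε hQ))
    (EReal.sInf_image_coe_le hI fun c hc => le_integral_of_mem_realWassersteinBall ?_ hQ)
  rwa [lowerBounds_closure]

lemma sInf_integral_image_realWassersteinBall_le [IsProbabilityMeasure ν] (hI : I.Nonempty)
    (hν : Integrable id ν) (hνI : ν (closure I)ᶜ = 0) (hνb : ∃ b, ∀ᵐ x ∂ν, b ≤ x)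
    (hε : 0 ≤ ε) :
    sInf ((fun Q : Measure ℝ => ((∫ t, t ∂Q : ℝ) : EReal)) ''
        realWassersteinBall 1 (closure I) ν ε) ≤
      max ((∫ x, x ∂ν - ε : ℝ) : EReal) (sInf ((fun t : ℝ => (t : EReal)) '' I)) := by
  by_cases hbd : BddBelow I
  · rw [EReal.sInf_image_coe_of_bddBelow hI hbd, ← EReal.coe_strictMono.monotone.map_max]
    have hinf : sInf I ∈ lowerBounds (closure I) := by
      rw [lowerBounds_closure]; exact fun x hx => csInf_le hbd hx
    obtain ⟨Q, hQ, hQmean⟩ := exists_mem_realWassersteinBall_integral_eq_max hν hνI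
      (csInf_mem_closure hI hbd) (ae_le_of_mem_lowerBounds hνI hinf) hε
    exact sInf_le ⟨Q, hQ, congrArg _ hQmean⟩
  · rw [EReal.sInf_image_coe_eq_bot hbd, max_bot_right]
    obtain ⟨b, hb⟩ := hνb
    obtain ⟨a, haI, ha⟩ := not_bddBelow_iff.1 hbd (min (∫ x, x ∂ν - ε) b)
    obtain ⟨Q, hQ, hQmean⟩ := exists_mem_realWassersteinBall_integral_eq_max hν hνI
      (subset_closure haI) (hb.mono fun x hx => ha.le.trans ((min_le_right _ _).trans hx)) hε
    rw [max_eq_left (ha.le.trans (min_le_left _ _))] at hQmean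
    exact sInf_le ⟨Q, hQ, congrArg _ hQmean⟩

end Extremal

theorem statement16_general {N : ℕ} (hN : 0 < N)
    (I : Set ℝ) (hI : I.Nonempty)
    (ζ : Fin N → ℝ) (hζ : ∀ i, ζ i ∈ I) (ε : ℝ) (hε : 0 < ε) :
    sInf ((fun Q : Measure ℝ => ((∫ t, t ∂Q : ℝ) : EReal)) ''
        realWassersteinBall 1 (closure I) (empMeasure ζ) ε) =
    max (((1 / (N : ℝ)) * ∑ i, ζ i - ε : ℝ) : EReal)
      (sInf ((fun t : ℝ => (t : EReal)) '' I)) := by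
  have := isProbabilityMeasure_empMeasure hN ζ
  have hν : Integrable id (empMeasure ζ) := integrable_empMeasure ζ id
  have hνI : empMeasure ζ (closure I)ᶜ = 0 :=
    ae_empMeasure (p := (· ∈ closure I)) fun i => subset_closure (hζ i)
  obtain ⟨b, hb⟩ := (finite_range ζ).bddBelow
  rw [show 1 / (N : ℝ) * ∑ i, ζ i = ∫ x, x ∂empMeasure ζ by
    simp [integral_empMeasure, one_div]]
  exact le_antisymm
    (sInf_integral_image_realWassersteinBall_le hI hν hνI
      ⟨b, ae_empMeasure fun i => hb ⟨i, rfl⟩⟩ hε.le)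
    (le_sInf_integral_image_realWassersteinBall hI hν hε.le)

/-- Best-case expected value over a `1`-Wasserstein ball around an empirical
distribution on an interval: `inf = max(mean − ε, inf I)`. -/
theorem statement16 {N : ℕ} (hN : 0 < N)
    (I : Set ℝ) (hI : I.Nonempty) (hIc : I.OrdConnected)
    (ζ : Fin N → ℝ) (hζ : ∀ i, ζ i ∈ I) (ε : ℝ) (hε : 0 < ε) :
    sInf ((fun Q : Measure ℝ => ((∫ t, t ∂Q : ℝ) : EReal)) ''
        realWassersteinBall 1 (closure I) (empMeasure ζ) ε) =
    max (((1 / (N : ℝ)) * ∑ i, ζ i - ε : ℝ) : EReal)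
      (sInf ((fun t : ℝ => (t : EReal)) '' I)) :=
  statement16_general hN I hI ζ hζ ε hε
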